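/- Let N ≥ 1, (β_{ij}) an integer matrix, a ∈ ℤ^N, and η ∈ {+,-,0}^N. For ε ∈ {+,-}^N set C_i^ε := a_i + ∑_{j>i, ε_j=+} α_{ij}^ε a_j (with α_{ij}^ε given by the chain-sum formula). Suppose for each i with η_i = + that C_i^ε ≥ -1 for all ε, and for each i with η_i = - that C_i^ε ≤ -1 for all ε. Let m ∈ ℤ^N be such that for each i, φ_m(e_i^+) = m_i + a_i and φ_m(e_i^-) = -m_i - ∑_{j>i} β_{ij} m_j are either both ≥ 0 or both < 0 (and not the case that exactly one is < 0). Define j_m := #{i : m_i + a_i < 0}. Then j_m ≥ #{i : η_i = -} and j_m ≤ N - #{i : η_i = +}. -/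

import Mathlib

open Finset

/-- Product of `β` over consecutive pairs of a list of indices. -/
def chainProd (β : ℕ → ℕ → ℤ) : List ℕ → ℤ
  | p :: q :: t => β p q * chainProd β (q :: t)
  | _ => 1

/-- The chain-sum invariant `α_{ij}^ε`: sum over chains `i = i_0 < … < i_k = j`
whose intermediate indices all have sign `-` (encoded as `false`), of
`(-1)^(k+1) ∏ β_{i_x i_{x+1}}`; chains are encoded by the set of intermediate indices. -/
def alphaC (β : ℕ → ℕ → ℤ) (ε : ℕ → Bool) (i j : ℕ) : ℤ :=
  ∑ S ∈ ((Finset.Ioo i j).filter fun k => ε k = false).powerset,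
    (-1 : ℤ) ^ S.card * chainProd β (i :: S.sort (· ≤ ·) ++ [j])

/-- `C_i^ε = a_i + ∑_{j>i, ε_j = +} α_{ij}^ε a_j`. -/
def Cc (N : ℕ) (β : ℕ → ℕ → ℤ) (a : ℕ → ℤ) (ε : ℕ → Bool) (i : ℕ) : ℤ :=
  a i + ∑ j ∈ (Finset.Ioo i N).filter fun j => ε j = true, alphaC β ε i j * a j

/-- `x` is the family `x^ε` defined by downward recursion:
`x^ε_i = -a_i` if `ε_i = +`, and `x^ε_i = -∑_{j>i} β_{ij} x^ε_j` if `ε_i = -`. -/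
def IsBSx (N : ℕ) (β : ℕ → ℕ → ℤ) (a : ℕ → ℤ) (x : (ℕ → Bool) → ℕ → ℤ) : Prop :=
  ∀ ε : ℕ → Bool, ∀ i < N,
    (ε i = true → x ε i = -a i) ∧
    (ε i = false → x ε i = -∑ j ∈ Finset.Ioo i N, β i j * x ε j)

/-- `φ_m(e_i^+) = m_i + a_i`. -/
def phiP (a m : ℕ → ℤ) (i : ℕ) : ℤ := m i + a i

/-- `φ_m(e_i^-) = -m_i - ∑_{j>i} β_{ij} m_j`. -/
def phiM (N : ℕ) (β : ℕ → ℕ → ℤ) (m : ℕ → ℤ) (i : ℕ) : ℤ :=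
  -m i - ∑ j ∈ Finset.Ioo i N, β i j * m j

/-- Sign vector attached to a finite set `S` of indices: `+` on `S`, `-` off `S`. -/
def epsOf (S : Finset ℕ) : ℕ → Bool := fun k => decide (k ∈ S)

/-- The weight `m^ε = ∏_{ε_i = +} λ_i ∏_{ε_i = -} (1 - λ_i)`, for the sign vector `epsOf S`. -/
def wt (N : ℕ) (lam : ℕ → ℝ) (S : Finset ℕ) : ℝ :=
  ∏ i ∈ Finset.range N, if i ∈ S then lam i else 1 - lam i

lemma chainProd_cons (β : ℕ → ℕ → ℤ) (p q : ℕ) (t : List ℕ) :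
    chainProd β (p :: q :: t) = β p q * chainProd β (q :: t) := rfl

lemma keyRec (β : ℕ → ℕ → ℤ) (i k : ℕ) (T : Finset ℕ) :
    ∑ S ∈ T.powerset, (-1:ℤ)^S.card * chainProd β (i :: S.sort (· ≤ ·) ++ [k])
      = β i k - ∑ j ∈ T, β i j *
          ∑ S ∈ (T.filter fun x => j < x).powerset,
            (-1:ℤ)^S.card * chainProd β (j :: S.sort (· ≤ ·) ++ [k]) := by
  induction T using Finset.induction_on_min with
  | empty => simp [chainProd]
  | insert t s hts ih =>
    have hns : t ∉ s := fun h => lt_irrefl t (hts t h)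
    rw [Finset.sum_powerset_insert hns, ih]
    have h1 : ∀ S ∈ s.powerset,
        (-1:ℤ)^(insert t S).card * chainProd β (i :: (insert t S).sort (· ≤ ·) ++ [k])
          = -(β i t * ((-1:ℤ)^S.card * chainProd β (t :: S.sort (· ≤ ·) ++ [k]))) := by
      intro S hS
      have hSs := Finset.mem_powerset.1 hS
      have htS : t ∉ S := fun h => hns (hSs h)
      have hlt : ∀ b ∈ S, t ≤ b := fun b hb => (hts b (hSs hb)).le
      rw [Finset.sort_insert _ hlt htS, Finset.card_insert_of_notMem htS]
      show (-1:ℤ)^(S.card+1) * chainProd β (i :: t :: (S.sort (· ≤ ·) ++ [k])) = _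
      rw [chainProd_cons]
      simp only [List.cons_append]
      ring
    rw [Finset.sum_congr rfl h1, Finset.sum_insert hns]
    have e1 : (insert t s).filter (fun x => t < x) = s := by
      rw [Finset.filter_insert, if_neg (lt_irrefl t), Finset.filter_true_of_mem hts]
    have e2 : ∀ j ∈ s, (insert t s).filter (fun x => j < x) = s.filter (fun x => j < x) := by
      intro j hj
      rw [Finset.filter_insert, if_neg (not_lt.2 (hts j hj).le)]
    have e3 : (∑ j ∈ s, β i j *
          ∑ S ∈ ((insert t s).filter fun x => j < x).powerset,
            (-1:ℤ)^S.card * chainProd β (j :: S.sort (· ≤ ·) ++ [k]))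
        = ∑ j ∈ s, β i j *
          ∑ S ∈ (s.filter fun x => j < x).powerset,
            (-1:ℤ)^S.card * chainProd β (j :: S.sort (· ≤ ·) ++ [k]) :=
      Finset.sum_congr rfl fun j hj => by rw [e2 j hj]
    rw [e1, e3, Finset.sum_neg_distrib, ← Finset.mul_sum]
    ring

lemma alphaC_rec (β : ℕ → ℕ → ℤ) (ε : ℕ → Bool) {i k : ℕ} :
    alphaC β ε i k = β i k - ∑ j ∈ (Finset.Ioo i k).filter (fun x => ε x = false),
      β i j * alphaC β ε j k := by
  unfold alphaC
  rw [keyRec]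
  congr 1
  refine Finset.sum_congr rfl fun j hj => ?_
  have hj' := Finset.mem_filter.1 hj
  have hji := (Finset.mem_Ioo.1 hj'.1).1
  have hjk := (Finset.mem_Ioo.1 hj'.1).2
  have hset : ((Finset.Ioo i k).filter fun x => ε x = false).filter (fun x => j < x)
      = (Finset.Ioo j k).filter fun x => ε x = false := by
    ext x
    simp only [Finset.mem_filter, Finset.mem_Ioo]
    constructor
    · rintro ⟨⟨⟨_, h2⟩, h3⟩, h4⟩; exact ⟨⟨h4, h2⟩, h3⟩
    · rintro ⟨⟨h1, h2⟩, h3⟩; exact ⟨⟨⟨lt_trans hji h1, h2⟩, h3⟩, h1⟩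
  rw [hset]

lemma keyId (N : ℕ) (β : ℕ → ℕ → ℤ) (m : ℕ → ℤ) (ε : ℕ → Bool) :
    ∀ d i, N ≤ i + d →
      ∑ j ∈ Finset.Ioo i N, alphaC β ε i j * (if ε j then m j else -(phiM N β m j))
        = ∑ j ∈ Finset.Ioo i N, β i j * m j := by
  intro d
  induction d with
  | zero =>
    intro i hi
    rw [Finset.Ioo_eq_empty (by omega)]
    simp
  | succ d ihd =>
    intro i hi
    set c : ℕ → ℤ := fun j => if ε j then m j else -(phiM N β m j) with hc
    have step1 : ∑ j ∈ Finset.Ioo i N, alphaC β ε i j * c j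
        = ∑ j ∈ Finset.Ioo i N, (β i j * c j
            - ∑ l ∈ (Finset.Ioo i j).filter (fun x => ε x = false),
                β i l * (alphaC β ε l j * c j)) := by
      refine Finset.sum_congr rfl fun j hj => ?_
      rw [alphaC_rec β ε, sub_mul, Finset.sum_mul]
      congr 1
      exact Finset.sum_congr rfl fun l _ => by ring
    rw [step1, Finset.sum_sub_distrib]
    -- the double sum
    have step2 : ∀ j ∈ Finset.Ioo i N,
        ∑ l ∈ (Finset.Ioo i j).filter (fun x => ε x = false), β i l * (alphaC β ε l j * c j)
          = ∑ l ∈ Finset.Ioo i N,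
              if l < j ∧ ε l = false then β i l * (alphaC β ε l j * c j) else 0 := by
      intro j hj
      have hjm := Finset.mem_Ioo.1 hj
      rw [← Finset.sum_filter]
      congr 1
      ext x
      simp only [Finset.mem_filter, Finset.mem_Ioo]
      constructor
      · rintro ⟨⟨h1, h2⟩, h3⟩; exact ⟨⟨h1, lt_trans h2 hjm.2⟩, h2, h3⟩
      · rintro ⟨⟨h1, _⟩, h2, h3⟩; exact ⟨⟨h1, h2⟩, h3⟩
    rw [Finset.sum_congr rfl step2, Finset.sum_comm]
    have step3 : ∀ l ∈ Finset.Ioo i N,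
        ∑ j ∈ Finset.Ioo i N, (if l < j ∧ ε l = false then β i l * (alphaC β ε l j * c j) else 0)
          = if ε l = false then β i l * (-(phiM N β m l) - m l) else 0 := by
      intro l hl
      have hlm := Finset.mem_Ioo.1 hl
      by_cases hεl : ε l = false
      · simp only [hεl, and_true, if_true]
        rw [← Finset.sum_filter]
        have hflt : (Finset.Ioo i N).filter (fun j => l < j) = Finset.Ioo l N := by
          ext x
          simp only [Finset.mem_filter, Finset.mem_Ioo]
          omega
        rw [hflt, ← Finset.mul_sum]
        have hIH := ihd l (by omega)
        rw [hIH]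
        have : phiM N β m l = -m l - ∑ j ∈ Finset.Ioo l N, β l j * m j := rfl
        rw [this]
        ring
      · simp [hεl]
    rw [Finset.sum_congr rfl step3, ← Finset.sum_sub_distrib]
    refine Finset.sum_congr rfl fun j hj => ?_
    by_cases hεj : ε j = false
    · rw [if_pos hεj]
      have : c j = -(phiM N β m j) := by rw [hc]; simp [hεj]
      rw [this]; ring
    · rw [if_neg hεj]
      have hεj' : ε j = true := by revert hεj; cases ε j <;> simp
      have : c j = m j := by rw [hc]; simp [hεj']
      rw [this]; ring

lemma CcId (N : ℕ) (β : ℕ → ℕ → ℤ) (a m : ℕ → ℤ) (ε : ℕ → Bool) (i : ℕ) :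
    Cc N β a ε i = phiP a m i + phiM N β m i
      + ∑ j ∈ Finset.Ioo i N,
          (if ε j then alphaC β ε i j * phiP a m j else -(alphaC β ε i j * phiM N β m j)) := by
  have K := keyId N β m ε N i (by omega)
  have split : ∀ j, (if ε j then alphaC β ε i j * phiP a m j
        else -(alphaC β ε i j * phiM N β m j))
      = (if ε j = true then alphaC β ε i j * a j else 0)
        + alphaC β ε i j * (if ε j then m j else -(phiM N β m j)) := by
    intro j
    cases hj : ε j <;> simp [hj, phiP] <;> ring
  rw [Finset.sum_congr rfl (fun j _ => split j), Finset.sum_add_distrib,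
    ← Finset.sum_filter, K]
  unfold Cc phiP phiM
  ring

lemma alphaC_congr (β : ℕ → ℕ → ℤ) {ε ε' : ℕ → Bool} {i j : ℕ}
    (h : ∀ k ∈ Finset.Ioo i j, ε k = ε' k) : alphaC β ε i j = alphaC β ε' i j := by
  unfold alphaC
  congr 1
  congr 1
  exact Finset.filter_congr fun k hk => by rw [h k hk]

lemma Cc_congr (N : ℕ) (β : ℕ → ℕ → ℤ) (a : ℕ → ℤ) {ε ε' : ℕ → Bool} (i : ℕ)
    (h : ∀ k ∈ Finset.Ioo i N, ε k = ε' k) : Cc N β a ε i = Cc N β a ε' i := by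
  unfold Cc
  congr 1
  have hf : (Finset.Ioo i N).filter (fun j => ε j = true)
      = (Finset.Ioo i N).filter (fun j => ε' j = true) := by
    ext x
    simp only [Finset.mem_filter]
    exact and_congr_right fun hx => by rw [h x hx]
  rw [hf]
  refine Finset.sum_congr rfl fun j hj => ?_
  have hj' := Finset.mem_Ioo.1 (Finset.mem_filter.1 hj).1
  rw [alphaC_congr β fun k hk => h k (Finset.mem_Ioo.2
    ⟨(Finset.mem_Ioo.1 hk).1, lt_trans (Finset.mem_Ioo.1 hk).2 hj'.2⟩)]

def epsC (β : ℕ → ℕ → ℤ) (a m : ℕ → ℤ) (b : Bool) (i : ℕ) (j : ℕ) : Bool :=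
  ((decide (0 ≤ alphaC β (fun k => if _h : k < j then epsC β a m b i k else false) i j)
    == decide (0 ≤ phiP a m j)) == b)
termination_by j
decreasing_by all_goals exact _h

lemma epsC_eq (β : ℕ → ℕ → ℤ) (a m : ℕ → ℤ) (b : Bool) (i j : ℕ) :
    epsC β a m b i j
      = ((decide (0 ≤ alphaC β (epsC β a m b i) i j) == decide (0 ≤ phiP a m j)) == b) := by
  rw [epsC]
  have : alphaC β (fun k => if _h : k < j then epsC β a m b i k else false) i j
      = alphaC β (epsC β a m b i) i j :=
    alphaC_congr β fun k hk => dif_pos (Finset.mem_Ioo.1 hk).2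
  rw [this]

lemma epsC_term_nonneg (N : ℕ) (β : ℕ → ℕ → ℤ) (a m : ℕ → ℤ) (i j : ℕ)
    (hmj : (0 ≤ phiP a m j ∧ 0 ≤ phiM N β m j) ∨ (phiP a m j < 0 ∧ phiM N β m j < 0)) :
    0 ≤ (if epsC β a m true i j then alphaC β (epsC β a m true i) i j * phiP a m j
      else -(alphaC β (epsC β a m true i) i j * phiM N β m j)) := by
  have he := epsC_eq β a m true i j
  set A := alphaC β (epsC β a m true i) i j with hA
  rcases le_or_gt 0 A with hA0 | hA0 <;> rcases hmj with ⟨h1, h2⟩ | ⟨h1, h2⟩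
  · have hε : epsC β a m true i j = true := by rw [he]; simp [hA0, h1]
    rw [if_pos hε]; exact mul_nonneg hA0 h1
  · have hε : epsC β a m true i j = false := by rw [he]; simp [hA0, not_le.2 h1]
    rw [if_neg (by simp [hε])]
    nlinarith
  · have hε : epsC β a m true i j = false := by rw [he]; simp [not_le.2 hA0, h1]
    rw [if_neg (by simp [hε])]
    nlinarith
  · have hε : epsC β a m true i j = true := by rw [he]; simp [not_le.2 hA0, not_le.2 h1]
    rw [if_pos hε]
    nlinarith

lemma epsC_term_nonpos (N : ℕ) (β : ℕ → ℕ → ℤ) (a m : ℕ → ℤ) (i j : ℕ)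
    (hmj : (0 ≤ phiP a m j ∧ 0 ≤ phiM N β m j) ∨ (phiP a m j < 0 ∧ phiM N β m j < 0)) :
    (if epsC β a m false i j then alphaC β (epsC β a m false i) i j * phiP a m j
      else -(alphaC β (epsC β a m false i) i j * phiM N β m j)) ≤ 0 := by
  have he := epsC_eq β a m false i j
  set A := alphaC β (epsC β a m false i) i j with hA
  rcases le_or_gt 0 A with hA0 | hA0 <;> rcases hmj with ⟨h1, h2⟩ | ⟨h1, h2⟩
  · have hε : epsC β a m false i j = false := by rw [he]; simp [hA0, h1]
    rw [if_neg (by simp [hε])]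
    exact neg_nonpos.2 (mul_nonneg hA0 h2)
  · have hε : epsC β a m false i j = true := by rw [he]; simp [hA0, not_le.2 h1]
    rw [if_pos hε]
    nlinarith
  · have hε : epsC β a m false i j = true := by rw [he]; simp [not_le.2 hA0, h1]
    rw [if_pos hε]
    nlinarith
  · have hε : epsC β a m false i j = false := by rw [he]; simp [not_le.2 hA0, not_le.2 h1]
    rw [if_neg (by simp [hε])]
    exact neg_nonpos.2 (mul_pos_of_neg_of_neg hA0 h2).le

lemma Cc_epsOf (N : ℕ) (β : ℕ → ℕ → ℤ) (a : ℕ → ℤ) (ε : ℕ → Bool) (i : ℕ) :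
    Cc N β a (epsOf ((Finset.range N).filter fun j => ε j = true)) i = Cc N β a ε i := by
  apply Cc_congr
  intro k hk
  have hkN : k < N := (Finset.mem_Ioo.1 hk).2
  cases hε : ε k <;> simp [epsOf, Finset.mem_filter, Finset.mem_range, hkN, hε]

/-- Combinatorial heart of the vanishing theorem: if `C_i^ε ≥ -1` for all `ε` whenever
`η_i = +`, and `C_i^ε ≤ -1` for all `ε` whenever `η_i = -`, then for every weight `m` with
no mixed signs, the degree `j_m = #{i : φ_m(e_i^+) < 0}` satisfies
`#{i : η_i = -} ≤ j_m ≤ N - #{i : η_i = +}`. -/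
theorem stmt11 (N : ℕ) (hN : 1 ≤ N) (β : ℕ → ℕ → ℤ) (a : ℕ → ℤ)
    (η : ℕ → Option Bool) (m : ℕ → ℤ)
    (hplus : ∀ i < N, η i = some true →
      ∀ S ∈ (Finset.range N).powerset, -1 ≤ Cc N β a (epsOf S) i)
    (hminus : ∀ i < N, η i = some false →
      ∀ S ∈ (Finset.range N).powerset, Cc N β a (epsOf S) i ≤ -1)
    (hm : ∀ i < N, (0 ≤ phiP a m i ∧ 0 ≤ phiM N β m i) ∨
      (phiP a m i < 0 ∧ phiM N β m i < 0)) :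
    ((Finset.range N).filter fun i => η i = some false).card ≤
        ((Finset.range N).filter fun i => phiP a m i < 0).card ∧
      ((Finset.range N).filter fun i => phiP a m i < 0).card ≤
        N - ((Finset.range N).filter fun i => η i = some true).card := by
  have claim_true : ∀ i < N, η i = some true → 0 ≤ phiP a m i := by
    intro i hi hη
    by_contra hP
    push_neg at hP
    have hMi : phiM N β m i < 0 := by
      rcases hm i hi with ⟨h1, _⟩ | ⟨_, h2⟩
      · exact absurd h1 (not_le.2 hP)
      · exact h2
    set ε := epsC β a m false i with hεdef
    have hge := hplus i hi hη ((Finset.range N).filter fun j => ε j = true)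
      (Finset.mem_powerset.2 (Finset.filter_subset _ _))
    rw [Cc_epsOf, CcId N β a m ε i] at hge
    have hsum : (∑ j ∈ Finset.Ioo i N,
        (if ε j then alphaC β ε i j * phiP a m j
          else -(alphaC β ε i j * phiM N β m j))) ≤ 0 :=
      Finset.sum_nonpos fun j hj =>
        epsC_term_nonpos N β a m i j (hm j (Finset.mem_Ioo.1 hj).2)
    have hP1 : phiP a m i ≤ -1 := by omega
    have hM1 : phiM N β m i ≤ -1 := by omega
    linarith
  have claim_false : ∀ i < N, η i = some false → phiP a m i < 0 := by
    intro i hi hη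
    by_contra hP
    push_neg at hP
    have hMi : 0 ≤ phiM N β m i := by
      rcases hm i hi with ⟨_, h2⟩ | ⟨h1, _⟩
      · exact h2
      · exact absurd h1 (not_lt.2 hP)
    set ε := epsC β a m true i with hεdef
    have hle := hminus i hi hη ((Finset.range N).filter fun j => ε j = true)
      (Finset.mem_powerset.2 (Finset.filter_subset _ _))
    rw [Cc_epsOf, CcId N β a m ε i] at hle
    have hsum : (0:ℤ) ≤ ∑ j ∈ Finset.Ioo i N,
        (if ε j then alphaC β ε i j * phiP a m j
          else -(alphaC β ε i j * phiM N β m j)) :=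
      Finset.sum_nonneg fun j hj =>
        epsC_term_nonneg N β a m i j (hm j (Finset.mem_Ioo.1 hj).2)
    linarith
  constructor
  · apply Finset.card_le_card
    intro x hx
    have hx' := Finset.mem_filter.1 hx
    exact Finset.mem_filter.2 ⟨hx'.1, claim_false x (Finset.mem_range.1 hx'.1) hx'.2⟩
  · have hsub : (Finset.range N).filter (fun i => phiP a m i < 0)
        ⊆ (Finset.range N) \ ((Finset.range N).filter fun i => η i = some true) := by
      intro x hx
      have hx' := Finset.mem_filter.1 hx
      refine Finset.mem_sdiff.2 ⟨hx'.1, fun hmem => ?_⟩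
      exact absurd hx'.2 (not_lt.2 (claim_true x (Finset.mem_range.1 hx'.1)
        (Finset.mem_filter.1 hmem).2))
    calc ((Finset.range N).filter fun i => phiP a m i < 0).card
        ≤ ((Finset.range N) \ ((Finset.range N).filter fun i => η i = some true)).card :=
          Finset.card_le_card hsub
      _ = N - ((Finset.range N).filter fun i => η i = some true).card := by
          rw [Finset.card_sdiff_of_subset (Finset.filter_subset _ _), Finset.card_range]
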